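/- arXiv:2211.00181 — 7 statements merged into one kernel-verified Lean document; each statement's English description precedes it below -/
import Mathlib

section
/- Let n be a natural number and E = EuclideanSpace ℝ (Fin n). For every x ∈ E with ‖x‖ < 1, the point φ(x) = ((1 + ‖x‖²)/(1 - ‖x‖²), (2/(1 - ‖x‖²)) • x) satisfies: its zeroth coordinate (1 + ‖x‖²)/(1 - ‖x‖²) ≥ 1, its Minkowski self-product [φ(x), φ(x)] = -1, and ψ(φ(x)) = x. Conversely, for every y = (y₀, yᵣ) ∈ ℝ × E with y₀ > 0 and [y, y] = -1, one has ‖ψ(y)‖ < 1 and φ(ψ(y)) = y. -/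
open RealInnerProductSpace

/-- The Minkowski product on `ℝ × E`. -/
noncomputable def mink {n : ℕ} (y w : ℝ × EuclideanSpace ℝ (Fin n)) : ℝ :=
  -(y.1 * w.1) + ⟪y.2, w.2⟫

/-- The transition map from the Poincaré ball to the Lorentz model. -/
noncomputable def phi {n : ℕ} (x : EuclideanSpace ℝ (Fin n)) : ℝ × EuclideanSpace ℝ (Fin n) :=
  ((1 + ‖x‖ ^ 2) / (1 - ‖x‖ ^ 2), (2 / (1 - ‖x‖ ^ 2)) • x)

/-- The transition map from the Lorentz model to the Poincaré ball. -/
noncomputable def psi {n : ℕ} (y : ℝ × EuclideanSpace ℝ (Fin n)) : EuclideanSpace ℝ (Fin n) :=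
  (1 / (1 + y.1)) • y.2

/-! Everything reduces to scalar identities in `s = ‖x‖²` resp. `y₀`: `φ` rescales `x` by
`2 / (1 - s) = 1 + φ(x)₀`, which is exactly the factor `ψ` divides by, and on the upper sheet
`‖yᵣ‖² = y₀² - 1` gives `‖ψ(y)‖² = (y₀ - 1) / (y₀ + 1) < 1`. -/

variable {n : ℕ}

lemma mink_self (y : ℝ × EuclideanSpace ℝ (Fin n)) : mink y y = ‖y.2‖ ^ 2 - y.1 ^ 2 := by
  rw [mink, real_inner_self_eq_norm_sq]
  ring

section Ball

variable {x : EuclideanSpace ℝ (Fin n)}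

lemma sq_norm_lt_one (hx : ‖x‖ < 1) : ‖x‖ ^ 2 < 1 := by
  nlinarith [norm_nonneg x]

lemma one_le_phi_fst (hx : ‖x‖ < 1) : 1 ≤ (phi x).1 := by
  have hpos : 0 < 1 - ‖x‖ ^ 2 := by linarith [sq_norm_lt_one hx]
  rw [phi, le_div_iff₀ hpos]
  nlinarith [sq_nonneg ‖x‖]

lemma mink_phi_self (hx : ‖x‖ < 1) : mink (phi x) (phi x) = -1 := by
  have hne : 1 - ‖x‖ ^ 2 ≠ 0 := by linarith [sq_norm_lt_one hx]
  rw [mink_self, phi, norm_smul, mul_pow, Real.norm_eq_abs, sq_abs]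
  field_simp
  ring

lemma one_add_phi_fst (hx : ‖x‖ < 1) : 1 + (phi x).1 = 2 / (1 - ‖x‖ ^ 2) := by
  have hne : 1 - ‖x‖ ^ 2 ≠ 0 := by linarith [sq_norm_lt_one hx]
  rw [phi]
  field_simp
  ring

lemma psi_phi (hx : ‖x‖ < 1) : psi (phi x) = x := by
  have hpos : 0 < 1 - ‖x‖ ^ 2 := by linarith [sq_norm_lt_one hx]
  rw [psi, one_add_phi_fst hx, phi, smul_smul, one_div_mul_cancel (by positivity), one_smul]

end Ball

section Hyperboloid

variable {y : ℝ × EuclideanSpace ℝ (Fin n)}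

lemma sq_norm_snd_of_mink_self (hy : mink y y = -1) : ‖y.2‖ ^ 2 = y.1 ^ 2 - 1 := by
  rw [mink_self] at hy
  linarith

lemma sq_norm_psi (h0 : 0 < y.1) (hy : mink y y = -1) :
    ‖psi y‖ ^ 2 = (y.1 - 1) / (y.1 + 1) := by
  have hpos : 0 < 1 + y.1 := by linarith
  rw [psi, norm_smul, mul_pow, sq_norm_snd_of_mink_self hy, Real.norm_eq_abs, sq_abs]
  field_simp
  ring

lemma norm_psi_lt_one (h0 : 0 < y.1) (hy : mink y y = -1) : ‖psi y‖ < 1 := by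
  have hlt : ‖psi y‖ ^ 2 < 1 := by
    rw [sq_norm_psi h0 hy, div_lt_one (by linarith)]
    linarith
  nlinarith [norm_nonneg (psi y)]

lemma phi_psi (h0 : 0 < y.1) (hy : mink y y = -1) : phi (psi y) = y := by
  have hpos : 0 < 1 + y.1 := by linarith
  have hsub : 1 - ‖psi y‖ ^ 2 = 2 / (1 + y.1) := by
    rw [sq_norm_psi h0 hy]
    field_simp
    ring
  have hadd : 1 + ‖psi y‖ ^ 2 = 2 * y.1 / (1 + y.1) := by
    rw [sq_norm_psi h0 hy]
    field_simp
    ring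
  rw [phi, hsub, hadd]
  ext1
  · field_simp
  · have hcancel : 2 / (2 / (1 + y.1)) * (1 / (1 + y.1)) = 1 := by field_simp
    rw [psi, smul_smul, hcancel, one_smul]

end Hyperboloid

theorem phi_psi_inverse (n : ℕ) :
    (∀ x : EuclideanSpace ℝ (Fin n), ‖x‖ < 1 →
      1 ≤ (phi x).1 ∧ mink (phi x) (phi x) = -1 ∧ psi (phi x) = x) ∧
    (∀ y : ℝ × EuclideanSpace ℝ (Fin n), 0 < y.1 → mink y y = -1 →
      ‖psi y‖ < 1 ∧ phi (psi y) = y) :=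
  ⟨fun _ hx => ⟨one_le_phi_fst hx, mink_phi_self hx, psi_phi hx⟩,
    fun _ h0 hy => ⟨norm_psi_lt_one h0 hy, phi_psi h0 hy⟩⟩
end

section
/- (φ is an isometry between the two distance formulas.) Let E = EuclideanSpace ℝ (Fin n) and let x, x' ∈ E satisfy ‖x‖ < 1 and ‖x'‖ < 1. Then -[φ(x), φ(x')] = 1 + 2*‖x - x'‖² / ((1 - ‖x‖²) * (1 - ‖x'‖²)). (Hence the Lorentz geodesic distance arccosh(-[φ(x), φ(x')]) equals the Poincaré geodesic distance arccosh(1 + 2‖x−x'‖²/((1−‖x‖²)(1−‖x'‖²))).) -/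
open RealInnerProductSpace

/-! Writing `φ(x) = (1 + ‖x‖², 2x) / (1 - ‖x‖²)`, the Minkowski product `-[φ x, φ x']` is
`((1 + ‖x‖²)(1 + ‖x'‖²) - 4⟪x, x'⟫) / ((1 - ‖x‖²)(1 - ‖x'‖²))`, and expanding
`‖x - x'‖² = ‖x‖² - 2⟪x, x'⟫ + ‖x'‖²` shows that the numerator exceeds the denominator by
exactly `2‖x - x'‖²`. -/

theorem one_add_norm_sq_mul_one_add_norm_sq_sub_four_inner {F : Type*}
    [NormedAddCommGroup F] [InnerProductSpace ℝ F] (x y : F) :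
    (1 + ‖x‖ ^ 2) * (1 + ‖y‖ ^ 2) - 4 * ⟪x, y⟫ =
      (1 - ‖x‖ ^ 2) * (1 - ‖y‖ ^ 2) + 2 * ‖x - y‖ ^ 2 := by
  rw [norm_sub_sq_real]
  ring

/-- On the unit sphere both sides are `0`, by the convention `a / 0 = 0`. -/
theorem neg_mink_phi {n : ℕ} (x x' : EuclideanSpace ℝ (Fin n)) :
    -mink (phi x) (phi x') =
      ((1 + ‖x‖ ^ 2) * (1 + ‖x'‖ ^ 2) - 4 * ⟪x, x'⟫) / ((1 - ‖x‖ ^ 2) * (1 - ‖x'‖ ^ 2)) := by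
  simp only [mink, phi, real_inner_smul_left, real_inner_smul_right, div_eq_mul_inv, mul_inv]
  ring

theorem one_sub_norm_sq_ne_zero {F : Type*} [SeminormedAddCommGroup F] {x : F} (hx : ‖x‖ < 1) :
    1 - ‖x‖ ^ 2 ≠ 0 :=
  (sub_pos.2 (pow_lt_one₀ (norm_nonneg x) hx two_ne_zero)).ne'

theorem phi_isometry (n : ℕ) (x x' : EuclideanSpace ℝ (Fin n))
    (hx : ‖x‖ < 1) (hx' : ‖x'‖ < 1) :
    -mink (phi x) (phi x') =
      1 + 2 * ‖x - x'‖ ^ 2 / ((1 - ‖x‖ ^ 2) * (1 - ‖x'‖ ^ 2)) := by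
  have hden : (1 - ‖x‖ ^ 2) * (1 - ‖x'‖ ^ 2) ≠ 0 :=
    mul_ne_zero (one_sub_norm_sq_ne_zero hx) (one_sub_norm_sq_ne_zero hx')
  rw [neg_mink_phi, one_add_norm_sq_mul_one_add_norm_sq_sub_four_inner, add_div, div_self hden]
end

section
/- (The differential of φ is a pointwise linear isometry into the tangent space.) Let E = EuclideanSpace ℝ (Fin n), let y = (y₀, yᵣ) ∈ ℝ × E satisfy y₀ > 0 and [y, y] = -1, and let v ∈ E. Then [y, Dφ_y(v)] = 0 and [Dφ_y(v), Dφ_y(v)] = (1 + y₀)² * ‖v‖². (That is, Dφ_y(v) is Minkowski-orthogonal to y, hence tangent to the Lorentz model at y, and its Lorentz norm equals λ_x‖v‖ = (1+y₀)‖v‖, the Poincaré Riemannian norm of v at the point x with φ(x) = y.) -/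
open RealInnerProductSpace

/-- The differential at `y = φ(x)` of the transition map `φ` from the Poincaré ball to the
Lorentz model, applied to a tangent vector `v`. -/
noncomputable def Dphi {n : ℕ} (y : ℝ × EuclideanSpace ℝ (Fin n))
    (v : EuclideanSpace ℝ (Fin n)) : ℝ × EuclideanSpace ℝ (Fin n) :=
  (⟪y.2, v⟫ * (1 + y.1), (1 + y.1) • v + ⟪y.2, v⟫ • y.2)

/-! Both Minkowski products are, for arbitrary `y`, the claimed values plus a multiple of the
defect `mink y y + 1`, which vanishes on the hyperboloid. -/

section

variable {n : ℕ} (y : ℝ × EuclideanSpace ℝ (Fin n)) (v : EuclideanSpace ℝ (Fin n))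

theorem mink_Dphi_right : mink y (Dphi y v) = ⟪y.2, v⟫ * (mink y y + 1) := by
  simp only [mink, Dphi, inner_add_right, real_inner_smul_right]
  ring

theorem mink_Dphi_self :
    mink (Dphi y v) (Dphi y v) = (1 + y.1) ^ 2 * ‖v‖ ^ 2 + ⟪y.2, v⟫ ^ 2 * (mink y y + 1) := by
  simp only [mink, Dphi, inner_add_left, inner_add_right, real_inner_smul_left,
    real_inner_smul_right, real_inner_comm y.2 v, ← real_inner_self_eq_norm_sq]
  ring

end

theorem Dphi_isometry_general (n : ℕ) (y : ℝ × EuclideanSpace ℝ (Fin n))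
    (hyy : mink y y = -1) (v : EuclideanSpace ℝ (Fin n)) :
    mink y (Dphi y v) = 0 ∧
    mink (Dphi y v) (Dphi y v) = (1 + y.1) ^ 2 * ‖v‖ ^ 2 := by
  constructor
  · rw [mink_Dphi_right, hyy]; ring
  · rw [mink_Dphi_self, hyy]; ring

theorem Dphi_isometry (n : ℕ) (y : ℝ × EuclideanSpace ℝ (Fin n)) (hy : 0 < y.1)
    (hyy : mink y y = -1) (v : EuclideanSpace ℝ (Fin n)) :
    mink y (Dphi y v) = 0 ∧
    mink (Dphi y v) (Dphi y v) = (1 + y.1) ^ 2 * ‖v‖ ^ 2 :=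
  Dphi_isometry_general n y hyy v
end

section
/- (Lemma 1 of the paper, Lorentz part.) Let E = EuclideanSpace ℝ (Fin n), let y = (y₀, yᵣ) ∈ ℝ × E satisfy y₀ > 0 and [y, y] = -1, and let u ∈ E. Define the Lorentz gradient vector w := (⟪yᵣ, u⟫/(1 + y₀), (1/(1 + y₀)) • u + (⟪yᵣ, u⟫/(1 + y₀)²) • yᵣ) ∈ ℝ × E, i.e. w = Dφ_y((1/(1+y₀)²) • u). Then its Euclidean norm satisfies √(w₀² + ‖wᵣ‖²) = √(2*⟪yᵣ, u⟫² + ‖u‖²)/(1 + y₀), and consequently √(w₀² + ‖wᵣ‖²) ≤ (√(2*y₀² - 1)/(1 + y₀)) * ‖u‖ ≤ √2 * ‖u‖. (With u = ∇f(x) the Euclidean gradient at x = ψ(y), w is the Lorentz Riemannian gradient ∇_{𝕃ⁿ} g(y) of g = f∘ψ, so ‖∇_{𝕃ⁿ} g(y)‖ = O(‖∇f(x)‖).) -/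
open RealInnerProductSpace

lemma norm_snd_sq_of_mink_self_eq_neg_one {n : ℕ} {y : ℝ × EuclideanSpace ℝ (Fin n)}
    (hyy : mink y y = -1) : ‖y.2‖ ^ 2 = y.1 ^ 2 - 1 := by
  rw [mink, real_inner_self_eq_norm_sq] at hyy
  linarith

section InnerProductSpace

variable {F : Type*} [NormedAddCommGroup F] [InnerProductSpace ℝ F]

/-- With `s = 1 + t`, the hyperboloid relation gives `‖v‖² = s (t - 1)`, so the cross term
`2⟪v,u⟫²/s³` and the last term `⟪v,u⟫²(t-1)/s³` add up to one more `⟪v,u⟫²/s²`. -/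
lemma sq_add_norm_sq_lorentz_gradient {t : ℝ} {v : F} (hv : ‖v‖ ^ 2 = t ^ 2 - 1)
    (ht : 1 + t ≠ 0) (u : F) :
    (⟪v, u⟫ / (1 + t)) ^ 2 + ‖(1 / (1 + t)) • u + (⟪v, u⟫ / (1 + t) ^ 2) • v‖ ^ 2 =
      (2 * ⟪v, u⟫ ^ 2 + ‖u‖ ^ 2) / (1 + t) ^ 2 := by
  rw [norm_add_sq_real, norm_smul, norm_smul, real_inner_smul_left, real_inner_smul_right,
    real_inner_comm u v, Real.norm_eq_abs, Real.norm_eq_abs, mul_pow, mul_pow, sq_abs, sq_abs, hv]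
  field_simp
  ring

lemma two_mul_inner_sq_add_norm_sq_le {t : ℝ} {v : F} (hv : ‖v‖ ^ 2 = t ^ 2 - 1) (u : F) :
    2 * ⟪v, u⟫ ^ 2 + ‖u‖ ^ 2 ≤ (2 * t ^ 2 - 1) * ‖u‖ ^ 2 := by
  have hcs : ⟪v, u⟫ ^ 2 ≤ ‖v‖ ^ 2 * ‖u‖ ^ 2 := by
    simpa only [sq, real_inner_self_eq_norm_mul_norm] using real_inner_mul_inner_self_le v u
  rw [hv] at hcs
  linarith

end InnerProductSpace

lemma sqrt_two_mul_sq_sub_one_le {t : ℝ} (ht : 0 ≤ t) :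
    Real.sqrt (2 * t ^ 2 - 1) ≤ Real.sqrt 2 * (1 + t) := by
  calc Real.sqrt (2 * t ^ 2 - 1) ≤ Real.sqrt (2 * (1 + t) ^ 2) := Real.sqrt_le_sqrt (by nlinarith)
    _ = Real.sqrt 2 * (1 + t) := by
      rw [Real.sqrt_mul zero_le_two, Real.sqrt_sq (by linarith)]

theorem lorentz_gradient_norm (n : ℕ) (y : ℝ × EuclideanSpace ℝ (Fin n)) (hy : 0 < y.1)
    (hyy : mink y y = -1) (u : EuclideanSpace ℝ (Fin n)) :
    Real.sqrt ((⟪y.2, u⟫ / (1 + y.1)) ^ 2 +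
        ‖(1 / (1 + y.1)) • u + (⟪y.2, u⟫ / (1 + y.1) ^ 2) • y.2‖ ^ 2) =
      Real.sqrt (2 * ⟪y.2, u⟫ ^ 2 + ‖u‖ ^ 2) / (1 + y.1) ∧
    Real.sqrt (2 * ⟪y.2, u⟫ ^ 2 + ‖u‖ ^ 2) / (1 + y.1) ≤
      Real.sqrt (2 * y.1 ^ 2 - 1) / (1 + y.1) * ‖u‖ ∧
    Real.sqrt (2 * y.1 ^ 2 - 1) / (1 + y.1) * ‖u‖ ≤ Real.sqrt 2 * ‖u‖ := by
  have hv := norm_snd_sq_of_mink_self_eq_neg_one hyy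
  have hs : 0 < 1 + y.1 := by linarith
  refine ⟨?_, ?_, ?_⟩
  · rw [sq_add_norm_sq_lorentz_gradient hv hs.ne', Real.sqrt_div' _ (sq_nonneg _),
      Real.sqrt_sq hs.le]
  · have h := Real.sqrt_le_sqrt (two_mul_inner_sq_add_norm_sq_le hv u)
    rw [Real.sqrt_mul' _ (sq_nonneg _), Real.sqrt_sq (norm_nonneg u)] at h
    rw [div_mul_eq_mul_div]
    gcongr
  · gcongr
    rw [div_le_iff₀ hs]
    exact sqrt_two_mul_sq_sub_one_le hy.le
end

section
/- (Theorem 1 of the paper, Poincaré part.) For every δ ∈ (0, 1] and every s ≥ 0, setting a := 1 - δ and b := Real.tanh (s * δ * (2 - δ) / 4), one has |(a + b)/(1 + a*b) - (1 - δ)| ≤ s * δ². (Here (a+b)/(1+ab) is the first coordinate of one step of Riemannian gradient descent exp_x(-η∇_{𝔻ⁿ}f(x)) in the Poincaré ball started at x = (1-δ)·e₁ with radial Euclidean gradient of magnitude E and step size η, where s = ηE; thus the update moves x by only O(ηEδ²).) -/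
/-!
Write `a = 1 - δ`. The Möbius sum satisfies `a ⊕ b - a = b (1 - a²) / (1 + a b)`, and the conformal
factor reappears as `1 - a² = δ (2 - δ)`. Since `0 ≤ tanh t ≤ t`, the displacement is at most
`t δ (2 - δ) = s δ² (2 - δ)² / 4 ≤ s δ²`: the two factors of `δ` come from the rescaling of the
gradient by `λ_x⁻²` and from the contraction `1 - a²` of Möbius translation near the boundary.
-/

namespace Real

theorem tanh_nonneg {x : ℝ} (hx : 0 ≤ x) : 0 ≤ tanh x := by
  rw [tanh_eq_sinh_div_cosh]
  exact div_nonneg (sinh_nonneg_iff.2 hx) (cosh_pos x).le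

theorem sinh_le_mul_cosh {x : ℝ} (hx : 0 ≤ x) : sinh x ≤ x * cosh x := by
  have hderiv (y : ℝ) : HasDerivAt (fun y => y * cosh y - sinh y) (y * sinh y) y :=
    (((hasDerivAt_id' y).mul (hasDerivAt_cosh y)).sub (hasDerivAt_sinh y)).congr_deriv
      (by ring)
  have hmono : MonotoneOn (fun y => y * cosh y - sinh y) (Set.Ici 0) := by
    refine monotoneOn_of_deriv_nonneg (convex_Ici 0) (by fun_prop)
      (fun y _ => (hderiv y).differentiableAt.differentiableWithinAt) fun y hy => ?_
    rw [(hderiv y).deriv]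
    have hy : 0 ≤ y := (interior_subset hy : y ∈ Set.Ici 0)
    exact mul_nonneg hy (sinh_nonneg_iff.2 hy)
  simpa using hmono Set.self_mem_Ici (Set.mem_Ici.2 hx) hx

theorem tanh_le_self {x : ℝ} (hx : 0 ≤ x) : tanh x ≤ x := by
  rw [tanh_eq_sinh_div_cosh, div_le_iff₀ (cosh_pos x)]
  exact sinh_le_mul_cosh hx

end Real

/-- Möbius addition on the real line, the one-dimensional case of `x ⊕ y` in the Poincaré ball. -/
noncomputable def mobiusAdd (a b : ℝ) : ℝ := (a + b) / (1 + a * b)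

theorem mobiusAdd_sub_left {a b : ℝ} (h : 1 + a * b ≠ 0) :
    mobiusAdd a b - a = b * (1 - a ^ 2) / (1 + a * b) := by
  rw [mobiusAdd, div_sub' h]
  ring_nf

theorem abs_mobiusAdd_sub_left_le {a b : ℝ} (hab : 0 ≤ a * b) (ha : a ^ 2 ≤ 1) :
    |mobiusAdd a b - a| ≤ |b| * (1 - a ^ 2) := by
  have hden : 1 ≤ 1 + a * b := by linarith
  rw [mobiusAdd_sub_left (by linarith), abs_div, abs_mul, abs_of_nonneg (sub_nonneg.2 ha),
    abs_of_pos (by linarith : 0 < 1 + a * b)]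
  exact div_le_self (mul_nonneg (abs_nonneg b) (sub_nonneg.2 ha)) hden

theorem poincare_gd_step (δ s : ℝ) (hδ : δ ∈ Set.Ioc (0 : ℝ) 1) (hs : 0 ≤ s) :
    |((1 - δ) + Real.tanh (s * δ * (2 - δ) / 4)) /
        (1 + (1 - δ) * Real.tanh (s * δ * (2 - δ) / 4)) - (1 - δ)| ≤ s * δ ^ 2 := by
  obtain ⟨hδ0, hδ1⟩ := hδ
  have h2δ : 0 ≤ 2 - δ := by linarith
  set t := s * δ * (2 - δ) / 4
  have ht0 : 0 ≤ t := by positivity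
  have hb0 := Real.tanh_nonneg ht0
  have hconf : 1 - (1 - δ) ^ 2 = δ * (2 - δ) := by ring
  calc |mobiusAdd (1 - δ) (Real.tanh t) - (1 - δ)|
      ≤ |Real.tanh t| * (1 - (1 - δ) ^ 2) :=
        abs_mobiusAdd_sub_left_le (mul_nonneg (by linarith) hb0) (by nlinarith)
    _ ≤ t * (δ * (2 - δ)) := by
        rw [abs_of_nonneg hb0, hconf]
        exact mul_le_mul_of_nonneg_right (Real.tanh_le_self ht0) (by positivity)
    _ = s * δ ^ 2 * ((2 - δ) ^ 2 / 4) := by ring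
    _ ≤ s * δ ^ 2 := mul_le_of_le_one_right (by positivity) (by nlinarith)
end

section
/- (Theorem 1 of the paper, Lorentz part.) Fix a real s > 0. For δ ∈ (0, 1) define t(δ) := s*δ*(2-δ)/2, A(δ) := (2 - 2δ + δ²)/(δ*(2-δ)), and B(δ) := (2 - 2δ)/(δ*(2-δ)). Then both functions δ ↦ (Real.cosh (t δ) * A δ + Real.sinh (t δ) * B δ) - (1/δ - 1/2 + s) and δ ↦ (Real.cosh (t δ) * B δ + Real.sinh (t δ) * A δ) - (1/δ - 1/2 + s) are O(δ) as δ → 0 from the right (i.e., Asymptotics.IsBigO along the filter nhdsWithin 0 (Set.Ioi 0) of the identity function). (These two expressions are the zeroth and first coordinates of one step of Riemannian gradient descent exp_y(-η∇_{𝕃ⁿ}g(y)) in the Lorentz model started at y = φ((1-δ)·e₁), with s = ηE and E the Euclidean gradient magnitude; hence the Lorentz update equals 10^k - 1/2 + ηE + O(ηE·10^{-k}) in each of the first two coordinates when δ = 10^{-k}.) -/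
/-!
With `t = sδ(2-δ)/2`, `A = (2-2δ+δ²)/(δ(2-δ))` and `B = (2-2δ)/(δ(2-δ))`, both coordinates are
`(eᵗ (A+B) ± e⁻ᵗ (A-B)) / 2`, where `A + B = (2-δ)/δ` and `A - B = δ/(2-δ)`. The `e⁻ᵗ` term is
`O(δ)`. Since `t = O(δ)`, we have `eᵗ = 1 + t + O(δ²)`, and expanding `(1+t)(2-δ)/(2δ)` gives
`1/δ - 1/2 + s + O(δ)`.
-/

open Asymptotics Filter Topology Real

theorem Asymptotics.IsBigO.mul_left_of_continuousAt {α : Type*} [TopologicalSpace α]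
    {𝕜 : Type*} [NormedField 𝕜] {c f g : α → 𝕜} {a : α}
    (hf : f =O[𝓝 a] g) (hc : ContinuousAt c a) : (fun x => c x * f x) =O[𝓝 a] g := by
  simpa using (hc.tendsto.isBigO_one 𝕜).mul hf

theorem Asymptotics.IsBigO.div_self_of_isBigO_sq {𝕜 : Type*} [NormedField 𝕜] {l : Filter 𝕜}
    {f : 𝕜 → 𝕜} (h : f =O[l] fun x => x ^ 2) : (fun x => f x / x) =O[l] fun x => x := by
  simpa only [div_eq_mul_inv, sq, mul_self_mul_inv] using h.mul (isBigO_refl (fun x => x⁻¹) l)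

theorem Real.cosh_mul_add_sinh_mul (t a b : ℝ) :
    cosh t * a + sinh t * b = (exp t * (a + b) + exp (-t) * (a - b)) / 2 := by
  rw [cosh_eq, sinh_eq]
  ring

theorem isBigO_exp_step_sub_sq (s : ℝ) :
    (fun δ : ℝ => exp (s * δ * (2 - δ) / 2) * (2 - δ) / 2 - 1 + δ / 2 - s * δ) =O[𝓝 0]
      fun δ => δ ^ 2 := by
  set t : ℝ → ℝ := fun δ => s * δ * (2 - δ) / 2 with ht
  have ht_tendsto : Tendsto t (𝓝 0) (𝓝 0) := by
    simpa [ht] using (show Continuous t by fun_prop).tendsto 0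
  have ht_isBigO : t =O[𝓝 0] fun δ => δ :=
    ((isBigO_refl (fun δ : ℝ => δ) _).mul_left_of_continuousAt
      (c := fun δ => s * (2 - δ) / 2) (by fun_prop)).congr_left fun δ => by simp only [ht]; ring
  have hexp : (fun δ => exp (t δ) - 1 - t δ) =O[𝓝 0] fun δ => δ ^ 2 := by
    have := (exp_sub_sum_range_isBigO_pow 2).comp_tendsto ht_tendsto
    simp only [Finset.sum_range_succ, Finset.sum_range_zero, Function.comp_def, pow_zero, pow_one,
      Nat.factorial_zero, Nat.factorial_one, Nat.cast_one, div_one, zero_add] at this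
    exact (this.trans (ht_isBigO.pow 2)).congr_left fun δ => by ring
  -- `(1 + t)(2 - δ)/2 - 1 + δ/2 - sδ = s(δ - 4)δ²/4`
  refine ((hexp.mul_left_of_continuousAt (c := fun δ => (2 - δ) / 2) (by fun_prop)).add
    ((isBigO_refl (fun δ : ℝ => δ ^ 2) _).mul_left_of_continuousAt
      (c := fun δ => s * (δ - 4) / 4) (by fun_prop))).congr_left fun δ => ?_
  simp only [ht]
  ring

theorem isBigO_exp_neg_step_mul (s : ℝ) :
    (fun δ : ℝ => exp (-(s * δ * (2 - δ) / 2)) * (δ / (2 - δ)) / 2) =O[𝓝 0] fun δ => δ := by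
  refine ((isBigO_refl (fun δ : ℝ => δ) _).mul_left_of_continuousAt
    (c := fun δ => exp (-(s * δ * (2 - δ) / 2)) / (2 - δ) / 2) ?_).congr_left fun δ => by ring
  fun_prop (disch := norm_num)

theorem lorentz_gd_step_general (s : ℝ) :
    ((fun δ : ℝ =>
        (Real.cosh (s * δ * (2 - δ) / 2) * ((2 - 2 * δ + δ ^ 2) / (δ * (2 - δ))) +
          Real.sinh (s * δ * (2 - δ) / 2) * ((2 - 2 * δ) / (δ * (2 - δ)))) -
        (1 / δ - 1 / 2 + s)) =O[nhdsWithin 0 (Set.Ioi 0)] fun δ : ℝ => δ) ∧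
    ((fun δ : ℝ =>
        (Real.cosh (s * δ * (2 - δ) / 2) * ((2 - 2 * δ) / (δ * (2 - δ))) +
          Real.sinh (s * δ * (2 - δ) / 2) * ((2 - 2 * δ + δ ^ 2) / (δ * (2 - δ)))) -
        (1 / δ - 1 / 2 + s)) =O[nhdsWithin 0 (Set.Ioi 0)] fun δ : ℝ => δ) := by
  have hmain := (isBigO_exp_step_sub_sq s).div_self_of_isBigO_sq.mono (nhdsWithin_le_nhds (s := Set.Ioi 0))
  have hrest := (isBigO_exp_neg_step_mul s).mono (nhdsWithin_le_nhds (s := Set.Ioi 0))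
  have hδ : ∀ᶠ δ in 𝓝[>] (0 : ℝ), δ ≠ 0 ∧ 2 - δ ≠ 0 := by
    filter_upwards [Ioo_mem_nhdsGT (zero_lt_two : (0 : ℝ) < 2)] with δ ⟨hδ0, hδ2⟩
    exact ⟨hδ0.ne', by linarith⟩
  constructor
  · refine (hmain.add hrest).congr' ?_ EventuallyEq.rfl
    filter_upwards [hδ] with δ ⟨hδ0, hδ2⟩
    rw [cosh_mul_add_sinh_mul]
    field_simp
    ring
  · refine (hmain.sub hrest).congr' ?_ EventuallyEq.rfl
    filter_upwards [hδ] with δ ⟨hδ0, hδ2⟩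
    rw [cosh_mul_add_sinh_mul]
    field_simp
    ring

theorem lorentz_gd_step (s : ℝ) (hs : 0 < s) :
    ((fun δ : ℝ =>
        (Real.cosh (s * δ * (2 - δ) / 2) * ((2 - 2 * δ + δ ^ 2) / (δ * (2 - δ))) +
          Real.sinh (s * δ * (2 - δ) / 2) * ((2 - 2 * δ) / (δ * (2 - δ)))) -
        (1 / δ - 1 / 2 + s)) =O[nhdsWithin 0 (Set.Ioi 0)] fun δ : ℝ => δ) ∧
    ((fun δ : ℝ =>
        (Real.cosh (s * δ * (2 - δ) / 2) * ((2 - 2 * δ) / (δ * (2 - δ))) +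
          Real.sinh (s * δ * (2 - δ) / 2) * ((2 - 2 * δ + δ ^ 2) / (δ * (2 - δ)))) -
        (1 / δ - 1 / 2 + s)) =O[nhdsWithin 0 (Set.Ioi 0)] fun δ : ℝ => δ) :=
  lorentz_gd_step_general s
end

section
/- (Theorem 2 of the paper: one step of Euclidean-parametrized gradient descent.) For every δ ∈ (0, 1] and every s ≥ 0, one has |(Real.log ((2 - δ)/δ) + (s/2) * δ * (2 - δ)) - (Real.log (2/δ) + (s - 1/2) * δ)| ≤ (1 + s) * δ². (The quantity ln((2−δ)/δ) + (s/2)δ(2−δ) is the first coordinate of the Euclidean gradient update z − η∇h(z) for h = f∘F_D at z = 2·artanh(1−δ)·e₁ with s = η‖∇f(x)‖; thus the update equals ln(10)k + ln 2 + (η‖∇f(x)‖ − 1/2)·10^{-k} + O(10^{-2k}) when δ = 10^{-k}.) -/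
/-! The difference of the two expressions is `log (1 - δ/2) + δ/2 - s δ²/2`, and the first-order
Taylor bound `|log (1 - x) + x| ≤ 2 x²` for `|x| ≤ 1/2` controls the logarithmic part. -/

open Real

theorem Real.abs_log_one_sub_add_le_two_mul_sq {x : ℝ} (hx : |x| ≤ 1 / 2) :
    |log (1 - x) + x| ≤ 2 * x ^ 2 := by
  have h := abs_log_sub_add_sum_range_le (hx.trans_lt (by norm_num)) 1
  norm_num at h
  calc |log (1 - x) + x| = |x + log (1 - x)| := by rw [add_comm]
    _ ≤ x ^ 2 / (1 - |x|) := h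
    _ ≤ x ^ 2 / (1 / 2) := by gcongr; linarith
    _ = 2 * x ^ 2 := by ring

theorem Real.log_div_sub_log_div {a b c : ℝ} (ha : a ≠ 0) (hb : b ≠ 0) (hc : c ≠ 0) :
    log (a / c) - log (b / c) = log (a / b) := by
  rw [← log_div (div_ne_zero ha hc) (div_ne_zero hb hc), div_div_div_cancel_right₀ hc]

theorem euclidean_gd_step (δ s : ℝ) (hδ : δ ∈ Set.Ioc (0 : ℝ) 1) (hs : 0 ≤ s) :
    |(Real.log ((2 - δ) / δ) + (s / 2) * δ * (2 - δ)) -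
        (Real.log (2 / δ) + (s - 1 / 2) * δ)| ≤ (1 + s) * δ ^ 2 := by
  obtain ⟨hδ₀, hδ₁⟩ := hδ
  have hlog : log ((2 - δ) / δ) - log (2 / δ) = log (1 - δ / 2) := by
    rw [log_div_sub_log_div (by linarith) two_ne_zero hδ₀.ne', sub_div, div_self two_ne_zero]
  have htaylor : |log (1 - δ / 2) + δ / 2| ≤ 2 * (δ / 2) ^ 2 :=
    abs_log_one_sub_add_le_two_mul_sq (by rw [abs_of_pos (by positivity)]; linarith)
  calc _ = |(log (1 - δ / 2) + δ / 2) - s * δ ^ 2 / 2| := by rw [← hlog]; ring_nf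
    _ ≤ |log (1 - δ / 2) + δ / 2| + |s * δ ^ 2 / 2| := abs_sub _ _
    _ ≤ 2 * (δ / 2) ^ 2 + s * δ ^ 2 / 2 := by
      rw [abs_of_nonneg (by positivity : 0 ≤ s * δ ^ 2 / 2)]; linarith
    _ ≤ (1 + s) * δ ^ 2 := by nlinarith [sq_nonneg δ, mul_nonneg hs (sq_nonneg δ)]
end
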